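/- Stationarity of the product Gibbs state at the phase boundary. With three qubits A_1, A_2, B, ω_{A_1} = ω_{A_2} + ω_B > 0, H = −(ω_{A_1}/2)σ^z_{A_1} − (ω_{A_2}/2)σ^z_{A_2} − (ω_B/2)σ^z_B + H_I where H_I = c σ^+_{A_1}σ^−_{A_2}σ^−_B + c̄ σ^−_{A_1}σ^+_{A_2}σ^+_B with c ≠ 0, and the product Gibbs state ρ_0 = ⊗_u e^{β_u ω_u σ^z/2}/(2cosh(β_u ω_u/2)): the state ρ_0 commutes with H (i.e., is stationary, e^{−iHt}ρ_0e^{iHt} = ρ_0 for all t) if and only if β_{A_1}ω_{A_1} = β_{A_2}ω_{A_2} + β_B ω_B. -/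

import Mathlib

open Matrix Kronecker Complex
open scoped ComplexOrder

noncomputable section

/-- Pauli X. -/
def σx : Matrix (Fin 2) (Fin 2) ℂ := !![0, 1; 1, 0]
/-- Pauli Y. -/
def σy : Matrix (Fin 2) (Fin 2) ℂ := !![0, -I; I, 0]
/-- Pauli Z. -/
def σz : Matrix (Fin 2) (Fin 2) ℂ := !![1, 0; 0, -1]
/-- Raising operator `σ⁺ = (σˣ + iσʸ)/2`. -/
def σp : Matrix (Fin 2) (Fin 2) ℂ := !![0, 1; 0, 0]
/-- Lowering operator `σ⁻ = (σˣ - iσʸ)/2`. -/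
def σm : Matrix (Fin 2) (Fin 2) ℂ := !![0, 0; 1, 0]

/-- Tensor product of a family of single-qubit operators, as a matrix on `⊗_{i : ι} ℂ²`. -/
def tpow {ι : Type*} [Fintype ι] (M : ι → Matrix (Fin 2) (Fin 2) ℂ) :
    Matrix (ι → Fin 2) (ι → Fin 2) ℂ :=
  Matrix.of fun f g => ∏ i, M i (f i) (g i)

/-- The single-qubit operator `M` acting on qubit `u`, tensored with the identity elsewhere. -/
def opAt {ι : Type*} [Fintype ι] [DecidableEq ι] (u : ι) (M : Matrix (Fin 2) (Fin 2) ℂ) :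
    Matrix (ι → Fin 2) (ι → Fin 2) ℂ :=
  tpow fun i => if i = u then M else 1

/-- The single-qubit Gibbs state `e^{βωσᶻ/2}/(2cosh(βω/2))` of the Hamiltonian `-(ω/2)σᶻ`
at inverse temperature `β`. -/
def gibbsQubit (β ω : ℝ) : Matrix (Fin 2) (Fin 2) ℂ :=
  ((2 * Real.cosh (β * ω / 2) : ℝ) : ℂ)⁻¹ •
    !![(Real.exp (β * ω / 2) : ℂ), 0; 0, (Real.exp (-(β * ω) / 2) : ℂ)]

/-- Reduced density matrix of a multi-qubit state on the single qubit `u`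
(partial trace over all other qubits). -/
def rdm1 {ι : Type*} [Fintype ι] [DecidableEq ι] (u : ι)
    (ρ : Matrix (ι → Fin 2) (ι → Fin 2) ℂ) : Matrix (Fin 2) (Fin 2) ℂ :=
  Matrix.of fun a b => ∑ g : ι → Fin 2, if g u = a then ρ g (Function.update g u b) else 0

/-- Reduced density matrix of a multi-qubit state on the (distinct) pair of qubits `u, v`
(partial trace over all other qubits). -/
def rdm2 {ι : Type*} [Fintype ι] [DecidableEq ι] (u v : ι)
    (ρ : Matrix (ι → Fin 2) (ι → Fin 2) ℂ) : Matrix (Fin 2 × Fin 2) (Fin 2 × Fin 2) ℂ :=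
  Matrix.of fun p q => ∑ g : ι → Fin 2,
    if g u = p.1 ∧ g v = p.2 then
      ρ g (Function.update (Function.update g u q.1) v q.2) else 0

/-- Reduced density matrix of a multi-qubit state on the (distinct) triple of qubits `u, v, w`
(partial trace over all other qubits). -/
def rdm3 {ι : Type*} [Fintype ι] [DecidableEq ι] (u v w : ι)
    (ρ : Matrix (ι → Fin 2) (ι → Fin 2) ℂ) :
    Matrix ((Fin 2 × Fin 2) × Fin 2) ((Fin 2 × Fin 2) × Fin 2) ℂ :=
  Matrix.of fun p q => ∑ g : ι → Fin 2,
    if g u = p.1.1 ∧ g v = p.1.2 ∧ g w = p.2 then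
      ρ g (Function.update (Function.update (Function.update g u q.1.1) v q.1.2) w q.2) else 0

/-- Unitary (Schrödinger) evolution `ρ(t) = e^{-iHt} ρ e^{iHt}` (with `ħ = 1`). -/
def evolve {n : Type*} [Fintype n] [DecidableEq n] (H ρ : Matrix n n ℂ) (t : ℝ) :
    Matrix n n ℂ :=
  NormedSpace.exp ((-(I * t)) • H) * ρ * NormedSpace.exp ((I * t) • H)

/-!
In the computational basis `ρ₀` is diagonal, with entry `∏ᵤ e^{±βᵤωᵤ/2}/(2cosh(βᵤωᵤ/2))` at a basis
state, and so are the `σᶻ` terms of `H`; they commute. The interaction is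
`c E_{xy} + c̄ E_{yx}` for the matrix units of `x = |011⟩` and `y = |100⟩`, and a diagonal matrix
commutes with it exactly when its entries at `x` and `y` agree. Since the Gibbs weights satisfy
`ρ₀(x) = e^{β_{A₁}ω_{A₁} - β_{A₂}ω_{A₂} - β_Bω_B} ρ₀(y)`, this is the phase-boundary condition.
Stationarity for all `t` is equivalent to commutation: one direction by `e^{-X}ρe^{X} = ρ` for
`X` commuting with `ρ`, the other by differentiating `ρ e^{iHt} = e^{iHt} ρ` at `t = 0`.
-/

section TensorProduct

variable {ι : Type*} [Fintype ι]

theorem tpow_mul [DecidableEq ι] (M N : ι → Matrix (Fin 2) (Fin 2) ℂ) :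
    tpow M * tpow N = tpow (M * N) := by
  ext f g
  simp only [tpow, mul_apply, of_apply, Pi.mul_apply]
  rw [← Fintype.piFinset_univ, Finset.prod_univ_sum]
  exact Finset.sum_congr rfl fun h _ => Finset.prod_mul_distrib.symm

theorem tpow_diagonal (d : ι → Fin 2 → ℂ) :
    tpow (fun i => diagonal (d i)) = diagonal fun g => ∏ i, d i (g i) := by
  ext f g
  by_cases hfg : f = g
  · subst hfg
    simp [tpow]
  · obtain ⟨i, hi⟩ := Function.ne_iff.mp hfg
    rw [diagonal_apply_ne _ hfg]
    exact Finset.prod_eq_zero (Finset.mem_univ i) (diagonal_apply_ne _ hi)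

theorem tpow_single (a b : ι → Fin 2) :
    tpow (fun i => single (a i) (b i) (1 : ℂ)) = single a b 1 := by
  ext f g
  simp only [tpow, of_apply, single_apply, Finset.prod_boole, Finset.mem_univ, true_imp_iff,
    funext_iff, forall_and]

theorem opAt_diagonal [DecidableEq ι] (u : ι) (d : Fin 2 → ℂ) :
    opAt u (diagonal d) = diagonal fun g => d (g u) := by
  have h : (fun i => if i = u then diagonal d else 1) =
      fun i => diagonal (if i = u then d else 1) := by
    funext i
    split_ifs <;> simp
  rw [opAt, h, tpow_diagonal]
  congr 1
  funext g
  rw [Fintype.prod_eq_single u fun i hi => by simp [hi], if_pos rfl]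

end TensorProduct

theorem opAt_mul_opAt_mul_opAt (M₀ M₁ M₂ : Matrix (Fin 2) (Fin 2) ℂ) :
    opAt (0 : Fin 3) M₀ * opAt 1 M₁ * opAt 2 M₂ = tpow ![M₀, M₁, M₂] := by
  rw [opAt, opAt, opAt, tpow_mul, tpow_mul]
  congr 1
  funext i
  fin_cases i <;> simp

theorem Commute.add_right_iff {α : Type*} [NonUnitalNonAssocRing α] {a b c : α}
    (hab : Commute a b) : Commute a (b + c) ↔ Commute a c :=
  ⟨fun h => by simpa using h.sub_right hab, hab.add_right⟩

section Commutation

variable {m R : Type*} [Fintype m] [DecidableEq m] [CommRing R]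

theorem commute_diagonal_iff (d : m → R) (M : Matrix m m R) :
    Commute (diagonal d) M ↔ ∀ k l, (d k - d l) * M k l = 0 := by
  simp only [Commute, SemiconjBy, ← Matrix.ext_iff, diagonal_mul, mul_diagonal, sub_mul,
    sub_eq_zero, mul_comm (M _ _)]

theorem commute_diagonal_single {d : m → R} {i j : m} (hd : d i = d j) (a : R) :
    Commute (diagonal d) (single i j a) := by
  refine (commute_diagonal_iff d _).2 fun k l => ?_
  by_cases hkl : i = k ∧ j = l
  · obtain ⟨rfl, rfl⟩ := hkl
    rw [hd, sub_self, zero_mul]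
  · rw [single_apply_of_ne _ _ _ _ _ hkl, mul_zero]

theorem commute_diagonal_single_add_single_iff [NoZeroDivisors R] (d : m → R) {i j : m}
    (hij : i ≠ j) {a : R} (ha : a ≠ 0) (b : R) :
    Commute (diagonal d) (single i j a + single j i b) ↔ d i = d j := by
  refine ⟨fun h => ?_, fun h => (commute_diagonal_single h a).add_right
    (commute_diagonal_single h.symm b)⟩
  have hij' := (commute_diagonal_iff d _).1 h i j
  rw [Matrix.add_apply, single_apply_same, single_apply_of_ne _ _ _ _ _ (fun h => hij h.1.symm),
    add_zero] at hij'
  exact sub_eq_zero.1 ((mul_eq_zero.1 hij').resolve_right ha)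

end Commutation

theorem σz_eq_diagonal : σz = diagonal ![1, -1] := by
  ext i j
  fin_cases i <;> fin_cases j <;> simp [σz]

theorem σp_eq_single : σp = single 0 1 1 := by
  ext i j
  fin_cases i <;> fin_cases j <;> simp [σp]

theorem σm_eq_single : σm = single 1 0 1 := by
  ext i j
  fin_cases i <;> fin_cases j <;> simp [σm]

theorem commute_diagonal_smul_opAt_σz {ι : Type*} [Fintype ι] [DecidableEq ι]
    (d : (ι → Fin 2) → ℂ) (r : ℂ) (u : ι) : Commute (diagonal d) (r • opAt u σz) := by
  rw [σz_eq_diagonal, opAt_diagonal]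
  exact (commute_diagonal _ _).smul_right r

theorem opAt_σp_mul_opAt_σm_mul_opAt_σm :
    opAt (0 : Fin 3) σp * opAt 1 σm * opAt 2 σm = single ![0, 1, 1] ![1, 0, 0] 1 := by
  rw [opAt_mul_opAt_mul_opAt, ← tpow_single]
  congr 1
  funext i
  fin_cases i <;> simp [σp_eq_single, σm_eq_single]

theorem opAt_σm_mul_opAt_σp_mul_opAt_σp :
    opAt (0 : Fin 3) σm * opAt 1 σp * opAt 2 σp = single ![1, 0, 0] ![0, 1, 1] 1 := by
  rw [opAt_mul_opAt_mul_opAt, ← tpow_single]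
  congr 1
  funext i
  fin_cases i <;> simp [σp_eq_single, σm_eq_single]

def gibbsWeight (x : ℝ) (a : Fin 2) : ℝ :=
  ![Real.exp (x / 2), Real.exp (-x / 2)] a / (2 * Real.cosh (x / 2))

theorem gibbsQubit_eq_diagonal (β ω : ℝ) :
    gibbsQubit β ω = diagonal fun a => (gibbsWeight (β * ω) a : ℂ) := by
  ext i j
  fin_cases i <;> fin_cases j <;> simp [gibbsQubit, gibbsWeight, div_eq_inv_mul]

theorem tpow_gibbsQubit {ι : Type*} [Fintype ι] (β ω : ι → ℝ) :
    tpow (fun i => gibbsQubit (β i) (ω i)) =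
      diagonal fun g => ((∏ i, gibbsWeight (β i * ω i) (g i) : ℝ) : ℂ) := by
  simp only [gibbsQubit_eq_diagonal, tpow_diagonal, Complex.ofReal_prod]

theorem gibbsWeight_pos (x : ℝ) (a : Fin 2) : 0 < gibbsWeight x a :=
  div_pos (by fin_cases a <;> exact Real.exp_pos _) (by positivity)

theorem gibbsWeight_zero (x : ℝ) : gibbsWeight x 0 = Real.exp x * gibbsWeight x 1 := by
  simp only [gibbsWeight, Matrix.cons_val_zero, Matrix.cons_val_one, mul_div_assoc',
    ← Real.exp_add]
  ring_nf

theorem gibbsWeight_balance_iff (x y z : ℝ) :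
    gibbsWeight x 0 * gibbsWeight y 1 * gibbsWeight z 1 =
      gibbsWeight x 1 * gibbsWeight y 0 * gibbsWeight z 0 ↔ x = y + z := by
  have hP := mul_pos (mul_pos (gibbsWeight_pos x 1) (gibbsWeight_pos y 1)) (gibbsWeight_pos z 1)
  rw [gibbsWeight_zero x, gibbsWeight_zero y, gibbsWeight_zero z]
  conv_rhs => rw [← Real.exp_eq_exp, Real.exp_add, ← mul_left_inj' hP.ne']
  constructor <;> intro h <;> linear_combination h

section Evolution

open NormedSpace

variable {n : Type*} [Fintype n] [DecidableEq n]

attribute [local instance] Matrix.linftyOpNormedRing Matrix.linftyOpNormedAlgebra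

theorem commute_exp_of_evolve_eq_self {H ρ : Matrix n n ℂ} {t : ℝ} (h : evolve H ρ t = ρ) :
    Commute ρ (exp ((I * t) • H)) := by
  rw [evolve, neg_smul] at h
  set A := (I * t) • H
  calc ρ * exp A = exp A * (exp (-A) * ρ * exp A) := by
        rw [← mul_assoc, ← mul_assoc, ← Matrix.exp_add_of_commute _ _ (Commute.refl A).neg_right,
          add_neg_cancel, NormedSpace.exp_zero, one_mul]
    _ = exp A * ρ := by rw [h]

theorem commute_of_forall_commute_exp {H ρ : Matrix n n ℂ}
    (h : ∀ t : ℝ, Commute ρ (exp ((I * t) • H))) : Commute ρ H := by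
  have hd : HasDerivAt (fun t : ℝ => exp ((I * t) • H)) (I • H) 0 := by
    have h0 := hasDerivAt_exp_smul_const (𝕂 := ℝ) (I • H) 0
    rw [zero_smul, NormedSpace.exp_zero, one_mul] at h0
    refine h0.congr_of_eventuallyEq (Filter.Eventually.of_forall fun t => ?_)
    dsimp only
    rw [← Complex.coe_smul, smul_smul, mul_comm]
    -- the `ℝ`-action from `linftyOpNormedAlgebra` is the usual one only up to unfolding
    rfl
  have hderiv : ρ * (I • H) = (I • H) * ρ :=
    (hd.const_mul ρ).unique (by simpa only [(h _).eq] using hd.mul_const ρ)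
  rw [mul_smul_comm, smul_mul_assoc] at hderiv
  exact smul_right_injective _ I_ne_zero hderiv

theorem forall_evolve_eq_self_iff (H ρ : Matrix n n ℂ) :
    (∀ t : ℝ, evolve H ρ t = ρ) ↔ Commute ρ H :=
  ⟨fun h => commute_of_forall_commute_exp fun t => commute_exp_of_evolve_eq_self (h t),
    fun h t => by
      rw [evolve, neg_smul]
      exact (h.smul_right _).exp_neg_mul_mul_exp_eq_self⟩

end Evolution

theorem product_gibbs_stationary_iff_phase_boundary_general
    (ωA1 ωA2 ωB : ℝ)
    (c : ℂ) (hc : c ≠ 0)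
    (βA1 βA2 βB : ℝ)
    (HI H : Matrix ((Fin 3) → Fin 2) ((Fin 3) → Fin 2) ℂ)
    (hHI : HI = c • (opAt (0 : Fin 3) σp * opAt (1 : Fin 3) σm * opAt (2 : Fin 3) σm)
        + (starRingEnd ℂ) c • (opAt (0 : Fin 3) σm * opAt (1 : Fin 3) σp * opAt (2 : Fin 3) σp))
    (hH : H = ((-(ωA1/2) : ℝ) : ℂ) • opAt (0 : Fin 3) σz
        + ((-(ωA2/2) : ℝ) : ℂ) • opAt (1 : Fin 3) σz
        + ((-(ωB/2) : ℝ) : ℂ) • opAt (2 : Fin 3) σz + HI)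
    (ρ₀ : Matrix ((Fin 3) → Fin 2) ((Fin 3) → Fin 2) ℂ)
    (hρ₀ : ρ₀ = tpow ![gibbsQubit βA1 ωA1, gibbsQubit βA2 ωA2, gibbsQubit βB ωB]) :
    (ρ₀ * H = H * ρ₀ ↔ βA1 * ωA1 = βA2 * ωA2 + βB * ωB) ∧
    ((∀ t : ℝ, evolve H ρ₀ t = ρ₀) ↔ βA1 * ωA1 = βA2 * ωA2 + βB * ωB) := by
  have hρ : ρ₀ = tpow fun i => gibbsQubit (![βA1, βA2, βB] i) (![ωA1, ωA2, ωB] i) := by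
    rw [hρ₀]
    congr 1
    funext i
    fin_cases i <;> rfl
  rw [tpow_gibbsQubit] at hρ
  rw [hHI, opAt_σp_mul_opAt_σm_mul_opAt_σm, opAt_σm_mul_opAt_σp_mul_opAt_σp, smul_single,
    smul_single, smul_eq_mul, smul_eq_mul, mul_one, mul_one] at hH
  have hcomm : Commute ρ₀ H ↔ βA1 * ωA1 = βA2 * ωA2 + βB * ωB := by
    rw [hρ, hH]
    refine (((commute_diagonal_smul_opAt_σz _ _ _).add_right
      (commute_diagonal_smul_opAt_σz _ _ _)).add_right
      (commute_diagonal_smul_opAt_σz _ _ _)).add_right_iff.trans ?_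
    rw [commute_diagonal_single_add_single_iff _ (by decide) hc, Complex.ofReal_inj]
    simpa [Fin.prod_univ_three] using gibbsWeight_balance_iff (βA1 * ωA1) (βA2 * ωA2) (βB * ωB)
  exact ⟨hcomm, (forall_evolve_eq_self_iff H ρ₀).trans hcomm⟩

/-- **stationarity of the product Gibbs state at the phase boundary.**
For qubits `A₁ = 0, A₂ = 1, B = 2`, `ω_{A₁} = ω_{A₂} + ω_B > 0`,
`H = -(ω_{A₁}/2)σᶻ_{A₁} - (ω_{A₂}/2)σᶻ_{A₂} - (ω_B/2)σᶻ_B + H_I` with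
`H_I = c σ⁺_{A₁}σ⁻_{A₂}σ⁻_B + c̄ σ⁻_{A₁}σ⁺_{A₂}σ⁺_B`, `c ≠ 0`, and product Gibbs state
`ρ₀`: `ρ₀` commutes with `H` (equivalently, `e^{-iHt}ρ₀e^{iHt} = ρ₀` for all `t`, i.e. `ρ₀`
is stationary) if and only if `β_{A₁}ω_{A₁} = β_{A₂}ω_{A₂} + β_Bω_B`. -/
theorem product_gibbs_stationary_iff_phase_boundary
    (ωA1 ωA2 ωB : ℝ) (hfreq : ωA1 = ωA2 + ωB) (hωA1 : 0 < ωA1)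
    (c : ℂ) (hc : c ≠ 0)
    (βA1 βA2 βB : ℝ)
    (HI H : Matrix ((Fin 3) → Fin 2) ((Fin 3) → Fin 2) ℂ)
    (hHI : HI = c • (opAt (0 : Fin 3) σp * opAt (1 : Fin 3) σm * opAt (2 : Fin 3) σm)
        + (starRingEnd ℂ) c • (opAt (0 : Fin 3) σm * opAt (1 : Fin 3) σp * opAt (2 : Fin 3) σp))
    (hH : H = ((-(ωA1/2) : ℝ) : ℂ) • opAt (0 : Fin 3) σz
        + ((-(ωA2/2) : ℝ) : ℂ) • opAt (1 : Fin 3) σz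
        + ((-(ωB/2) : ℝ) : ℂ) • opAt (2 : Fin 3) σz + HI)
    (ρ₀ : Matrix ((Fin 3) → Fin 2) ((Fin 3) → Fin 2) ℂ)
    (hρ₀ : ρ₀ = tpow ![gibbsQubit βA1 ωA1, gibbsQubit βA2 ωA2, gibbsQubit βB ωB]) :
    (ρ₀ * H = H * ρ₀ ↔ βA1 * ωA1 = βA2 * ωA2 + βB * ωB) ∧
    ((∀ t : ℝ, evolve H ρ₀ t = ρ₀) ↔ βA1 * ωA1 = βA2 * ωA2 + βB * ωB) :=
  product_gibbs_stationary_iff_phase_boundary_general ωA1 ωA2 ωB c hc βA1 βA2 βB HI H hHI hH ρ₀ hρ₀
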